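/- As X → ∞, one has log X · ∫_{1}^{2 − 2/X} 1 / ( (log(2 − t) + log X) · t ) dt → log 2. -/

import Mathlib

/-!
After multiplying by `log X` and extending by zero beyond `2 - 2 / X`, the integrand on `(1, 2]`
tends pointwise to `1 / t`, because `log X / (log (2 - t) + log X) → 1`. On the range of
integration `log (2 - t) + log X = log (X (2 - t)) ≥ log 2`, which gives the integrable majorant
`1 - log (2 - t) / log 2`; dominated convergence then yields `∫ t in 1..2, 1 / t = log 2`.
-/

open Real Filter Topology MeasureTheory intervalIntegral

theorem div_add_le_one_sub_div {c y m : ℝ} (hc : c ≤ 0) (hm : 0 < m) (hmy : m ≤ c + y) :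
    y / (c + y) ≤ 1 - c / m := by
  have hpos : 0 < c + y := hm.trans_le hmy
  have key : -c / (c + y) ≤ -c / m := div_le_div_of_nonneg_left (neg_nonneg.mpr hc) hm hmy
  calc y / (c + y) = 1 + -c / (c + y) := by field_simp; ring
    _ ≤ 1 + -c / m := by gcongr
    _ = 1 - c / m := by ring

theorem tendsto_log_div_const_add_log (c : ℝ) :
    Tendsto (fun X => log X / (c + log X)) atTop (𝓝 1) := by
  have hden : Tendsto (fun X => c + log X) atTop atTop :=
    tendsto_atTop_add_const_left _ _ tendsto_log_atTop
  have h := (tendsto_const_nhds (x := c)).div_atTop hden |>.const_sub 1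
  rw [sub_zero] at h
  refine h.congr' ?_
  filter_upwards [hden.eventually_gt_atTop 0] with X hX
  field_simp
  ring

theorem log_le_log_sub_add_log {a b t X : ℝ} (ha : 0 < a) (hX : 0 < X) (ht : t ≤ b - a / X) :
    log a ≤ log (b - t) + log X := by
  have h := log_le_log (by positivity) (show a / X ≤ b - t by linarith)
  rw [log_div ha.ne' hX.ne'] at h
  linarith

/-- Extending by zero beyond `2 - 2 / X` gives all `X` the common interval of integration
`[1, 2]`. -/
noncomputable def truncJ (X : ℝ) : ℝ → ℝ :=
  {t | t ≤ 2 - 2 / X}.indicator fun t => log X / ((log (2 - t) + log X) * t)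

theorem measurable_truncJ (X : ℝ) : Measurable (truncJ X) :=
  Measurable.indicator (by fun_prop) measurableSet_Iic

theorem intervalIntegrable_one_sub_log_two_sub_div :
    IntervalIntegrable (fun t => 1 - log (2 - t) / log 2) volume 1 2 := by
  have h := (intervalIntegrable_log' (a := 1) (b := 0)).comp_sub_left 2
  norm_num at h
  exact intervalIntegrable_const.sub (h.div_const _)

theorem norm_truncJ_le {X t : ℝ} (hX : 1 ≤ X) (ht : t ∈ Set.Ioc 1 2) :
    ‖truncJ X t‖ ≤ 1 - log (2 - t) / log 2 := by
  have hlog2 : 0 < log 2 := log_pos one_lt_two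
  have hc : log (2 - t) ≤ 0 := log_nonpos (by linarith [ht.2]) (by linarith [ht.1])
  have hbound : 0 ≤ 1 - log (2 - t) / log 2 := by
    have := div_nonpos_of_nonpos_of_nonneg hc hlog2.le
    linarith
  by_cases htX : t ≤ 2 - 2 / X
  · have hL := log_le_log_sub_add_log two_pos (by linarith) htX
    have hLpos : 0 < log (2 - t) + log X := hlog2.trans_le hL
    have hratio : 0 ≤ log X / (log (2 - t) + log X) :=
      div_nonneg (log_nonneg hX) hLpos.le
    rw [truncJ, Set.indicator_of_mem (s := {t | t ≤ 2 - 2 / X}) htX, ← div_div,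
      norm_of_nonneg (div_nonneg hratio (by linarith [ht.1]))]
    calc log X / (log (2 - t) + log X) / t ≤ log X / (log (2 - t) + log X) :=
          div_le_self hratio ht.1.le
      _ ≤ 1 - log (2 - t) / log 2 := by
          simpa only [add_comm] using div_add_le_one_sub_div hc hlog2 hL
  · rwa [truncJ, Set.indicator_of_notMem (s := {t | t ≤ 2 - 2 / X}) htX, norm_zero]

theorem tendsto_truncJ {t : ℝ} (ht : t < 2) :
    Tendsto (fun X => truncJ X t) atTop (𝓝 (1 / t)) := by
  have h := (tendsto_log_div_const_add_log (log (2 - t))).div_const t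
  refine h.congr' ?_
  filter_upwards [eventually_ge_atTop (2 / (2 - t))] with X hX
  have hXpos : 0 < X := (div_pos two_pos (sub_pos.mpr ht)).trans_le hX
  have htX : t ≤ 2 - 2 / X := by
    rw [div_le_iff₀ (sub_pos.mpr ht)] at hX
    rw [le_sub_comm, div_le_iff₀ hXpos]
    linarith
  rw [truncJ, Set.indicator_of_mem (s := {t | t ≤ 2 - 2 / X}) htX, div_div]

theorem integral_truncJ {X : ℝ} (hX : 2 ≤ X) :
    ∫ t in (1:ℝ)..2, truncJ X t =
      log X * ∫ t in (1:ℝ)..(2 - 2 / X), 1 / ((log (2 - t) + log X) * t) := by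
  have h2X : 2 / X ≤ 1 := (div_le_one (by linarith)).mpr hX
  have h2X' : 0 ≤ 2 / X := div_nonneg zero_le_two (by linarith)
  have hmem : 2 - 2 / X ∈ Set.Icc (1:ℝ) 2 := ⟨by linarith, by linarith⟩
  simp only [truncJ, integral_indicator hmem, ← intervalIntegral.integral_const_mul, mul_one_div]

/-- As X → ∞, log X · ∫_1^{2−2/X} dt / ((log(2−t) + log X) t) → log 2. -/
theorem integral_J_asymptotics :
    Filter.Tendsto (fun X : ℝ =>
        Real.log X * ∫ t in (1:ℝ)..(2 - 2 / X),
          1 / ((Real.log (2 - t) + Real.log X) * t))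
      Filter.atTop (nhds (Real.log 2)) := by
  have hIoc : Set.uIoc (1:ℝ) 2 = Set.Ioc 1 2 := Set.uIoc_of_le one_le_two
  have h := tendsto_integral_filter_of_dominated_convergence (F := truncJ) (f := fun t => 1 / t) _
    (.of_forall fun X => (measurable_truncJ X).aestronglyMeasurable)
    ((eventually_ge_atTop 1).mono fun X hX =>
      .of_forall fun t ht => norm_truncJ_le hX (hIoc ▸ ht))
    intervalIntegrable_one_sub_log_two_sub_div
    ((Measure.ae_ne volume 2).mono fun t ht2 ht => tendsto_truncJ ((hIoc ▸ ht).2.lt_of_ne ht2))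
  rw [integral_one_div (by norm_num), div_one] at h
  exact h.congr' ((eventually_ge_atTop 2).mono fun X hX => integral_truncJ hX)
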